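/- Indefinite Young integral on dyadic cubes with Young–Loeve estimate (Theorems 4.4 and 4.5, dyadic form). Let d ≥ 1 and β, γ ∈ (0,1) with γ > (d−1)/d and β + dγ > d. There exists a constant C ≥ 0, depending only on d, β, γ, such that for every β-Hölder continuous f : [0,1]^d → ℝ and every additive function ω on the dyadic cubes of [0,1]^d with ‖ω‖_γ < ∞, there exists a unique additive function θ on the dyadic cubes of [0,1]^d satisfying: for every dyadic cube K and every point x ∈ K, |θ(K) − f(x) ω(K)| ≤ C · Lip^β(f) · ‖ω‖_γ · |K|^{γ + β/d}. -/

import Mathlib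

open MeasureTheory Filter
open scoped BigOperators ENNReal Classical

noncomputable section

/-- Points of `ℝ^d` with the Euclidean norm. -/
abbrev Euc (d : ℕ) := EuclideanSpace ℝ (Fin d)

/-- The closed dyadic cube of generation `n` with lower corner `2^{-n} k` inside `[0,1]^d`. -/
def dyCube (d n : ℕ) (k : Fin d → ℕ) : Set (Euc d) :=
  {x | ∀ i, (k i : ℝ) / 2 ^ n ≤ x i ∧ x i ≤ ((k i : ℝ) + 1) / 2 ^ n}

/-- The unit cube `[0,1]^d`. -/
def uCube (d : ℕ) : Set (Euc d) := dyCube d 0 (fun _ => 0)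

/-- Volume `2^{-nd}` of a dyadic cube of generation `n`. -/
def dyVol (d n : ℕ) : ℝ := ((2 : ℝ) ^ (n * d))⁻¹

/-- A real valued function on the dyadic cubes of `[0,1]^d` (encoded by generation and
lower-corner index) is additive if its value on each cube is the sum of its values
on the `2^d` children. -/
def IsAdditiveDy (d : ℕ) (ω : ∀ _ : ℕ, (Fin d → ℕ) → ℝ) : Prop :=
  ∀ n (k : Fin d → ℕ), (∀ i, k i < 2 ^ n) →
    ω n k = ∑ j : Fin d → Fin 2, ω (n + 1) (fun i => 2 * k i + (j i : ℕ))

/-- The Haar function `g_{n,k,ε}` on `[0,1]^d`. -/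
def haarF (d n : ℕ) (k : Fin d → ℕ) (ε : Fin d → Bool) (x : Euc d) : ℝ :=
  if ∀ i, (k i : ℝ) / 2 ^ n ≤ x i ∧ x i < ((k i : ℝ) + 1) / 2 ^ n then
    (2 : ℝ) ^ (((n * d : ℕ) : ℝ) / 2) *
      ∏ i, (if ε i then (if (2 : ℝ) ^ n * x i - (k i : ℝ) < 1 / 2 then (1 : ℝ) else -1) else 1)
  else 0

/-- The Faber–Schauder coefficient `a_{n,k,ε}(ω)` of an additive function on dyadic cubes. -/
def fsCoeff (d : ℕ) (ω : ∀ _ : ℕ, (Fin d → ℕ) → ℝ) (n : ℕ) (k : Fin d → ℕ)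
    (ε : Fin d → Bool) : ℝ :=
  (2 : ℝ) ^ (((n * d : ℕ) : ℝ) / 2) *
    ∑ j : Fin d → Fin 2,
      (∏ i, (if ε i then (if j i = 0 then (1 : ℝ) else -1) else 1)) *
        ω (n + 1) (fun i => 2 * k i + (j i : ℕ))


namespace Young

/-- base-2 real power -/
def pw (x : ℝ) : ℝ := (2 : ℝ) ^ x

lemma pw_pos (x : ℝ) : 0 < pw x := Real.rpow_pos_of_pos two_pos x
lemma pw_nonneg (x : ℝ) : 0 ≤ pw x := (pw_pos x).le
lemma pw_add (x y : ℝ) : pw (x + y) = pw x * pw y := Real.rpow_add two_pos x y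
lemma pw_mono {x y : ℝ} (h : x ≤ y) : pw x ≤ pw y :=
  Real.rpow_le_rpow_left_iff (by norm_num : (1:ℝ) < 2) |>.2 h
lemma pw_natCast (c : ℕ) : ((2:ℝ) ^ c) = pw c := (Real.rpow_natCast 2 c).symm
lemma pw_neg_natCast (c : ℕ) : ((2:ℝ) ^ c)⁻¹ = pw (-(c:ℝ)) := by
  rw [pw_natCast, pw, pw, ← Real.rpow_neg (by norm_num)]
lemma pw_nat_pow (x : ℝ) (m : ℕ) : pw x ^ m = pw (x * m) := by
  rw [pw, pw, ← Real.rpow_natCast ((2:ℝ) ^ x) m, ← Real.rpow_mul (by norm_num)]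
lemma pw_rpow (x y : ℝ) : pw x ^ y = pw (x * y) := by
  rw [pw, pw, ← Real.rpow_mul (by norm_num)]
lemma pw_lt_one {x : ℝ} (h : x < 0) : pw x < 1 := by
  have := Real.rpow_lt_one_of_one_lt_of_neg (x := (2:ℝ)) (by norm_num) h
  simpa [pw] using this

lemma dyVol_rpow (d N : ℕ) (x : ℝ) : dyVol d N ^ x = pw (-((N*d : ℕ) : ℝ) * x) := by
  rw [dyVol, pw_neg_natCast, pw_rpow]

/-- lower corner of a dyadic cube -/
def corner (d n : ℕ) (k : Fin d → ℕ) : Euc d := WithLp.toLp 2 (fun i => (k i : ℝ) / 2 ^ n)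

lemma corner_apply (d n : ℕ) (k : Fin d → ℕ) (i : Fin d) :
    corner d n k i = (k i : ℝ) / 2 ^ n := rfl

lemma corner_mem (d n : ℕ) (k : Fin d → ℕ) : corner d n k ∈ dyCube d n k := by
  intro i
  constructor
  · exact le_refl _
  · rw [corner_apply]
    have h2 : (0:ℝ) < 2 ^ n := by positivity
    rw [div_le_div_iff₀ h2 h2]
    nlinarith

lemma dyCube_subset_uCube {d n : ℕ} {k : Fin d → ℕ} (hk : ∀ i, k i < 2 ^ n) :
    dyCube d n k ⊆ uCube d := by
  intro x hx i
  have h := hx i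
  have h2 : (0:ℝ) < 2 ^ n := by positivity
  have hki : ((k i : ℝ) + 1) ≤ 2 ^ n := by
    have := hk i
    have : (k i : ℝ) + 1 ≤ ((2:ℝ) ^ n : ℝ) := by exact_mod_cast Nat.succ_le_of_lt this
    exact this
  constructor
  · simp only [Nat.cast_zero]
    calc (0:ℝ) / 2 ^ (0:ℕ) = 0 := by norm_num
    _ ≤ (k i : ℝ) / 2 ^ n := by positivity
    _ ≤ x i := h.1
  · simp only [Nat.cast_zero]
    calc x i ≤ ((k i : ℝ) + 1) / 2 ^ n := h.2
    _ ≤ 1 := by rw [div_le_one h2]; linarith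
    _ = ((0:ℝ) + 1) / 2 ^ (0:ℕ) := by norm_num

lemma norm_le_of_coord {d : ℕ} (x : Euc d) (t : ℝ) (ht : 0 ≤ t) (h : ∀ i, |x i| ≤ t) :
    ‖x‖ ≤ Real.sqrt d * t := by
  rw [EuclideanSpace.norm_eq]
  calc Real.sqrt (∑ i, ‖x i‖ ^ 2) ≤ Real.sqrt (∑ _i : Fin d, t ^ 2) := by
        apply Real.sqrt_le_sqrt; apply Finset.sum_le_sum; intro i _
        have hxi : ‖x i‖ ≤ t := by simpa [Real.norm_eq_abs] using h i
        nlinarith [norm_nonneg (x i)]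
    _ = Real.sqrt (d * t ^ 2) := by rw [Finset.sum_const]; simp [mul_comm]
    _ = Real.sqrt d * t := by
        rw [Real.sqrt_mul (by positivity), Real.sqrt_sq ht]

lemma dist_le_in_cube {d n : ℕ} {k : Fin d → ℕ} {x y : Euc d}
    (hx : x ∈ dyCube d n k) (hy : y ∈ dyCube d n k) :
    ‖x - y‖ ≤ Real.sqrt d * pw (-(n:ℝ)) := by
  apply norm_le_of_coord _ _ (pw_nonneg _)
  intro i
  obtain ⟨a1, a2⟩ := hx i
  obtain ⟨b1, b2⟩ := hy i
  have hxy : (x - y) i = x i - y i := rfl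
  rw [hxy, ← pw_neg_natCast]
  have h2n : (0:ℝ) < 2 ^ n := by positivity
  have A1 : (k i : ℝ) ≤ x i * 2 ^ n := (div_le_iff₀ h2n).1 a1
  have A2 : x i * 2 ^ n ≤ (k i : ℝ) + 1 := (le_div_iff₀ h2n).1 a2
  have B1 : (k i : ℝ) ≤ y i * 2 ^ n := (div_le_iff₀ h2n).1 b1
  have B2 : y i * 2 ^ n ≤ (k i : ℝ) + 1 := (le_div_iff₀ h2n).1 b2
  have hinv : ((2:ℝ) ^ n)⁻¹ * 2 ^ n = 1 := inv_mul_cancel₀ (ne_of_gt h2n)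
  rw [abs_le]
  constructor <;> nlinarith


theorem sum_pi_fin_mul {d : ℕ} (a b : ℕ) (g : (Fin d → ℕ) → ℝ) :
    ∑ p : Fin d → Fin (a * b), g (fun i => (p i : ℕ)) =
      ∑ u : Fin d → Fin a, ∑ v : Fin d → Fin b, g (fun i => (v i : ℕ) + b * (u i : ℕ)) := by
  calc ∑ p : Fin d → Fin (a * b), g (fun i => (p i : ℕ))
      = ∑ q : (Fin d → Fin a) × (Fin d → Fin b), g (fun i => ((q.2 i : ℕ) + b * (q.1 i : ℕ))) := by
        refine (Fintype.sum_equiv ((Equiv.arrowProdEquivProdArrow (Fin d) (fun _ => Fin a) (fun _ => Fin b)).symm.trans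
          (Equiv.piCongrRight (fun _ : Fin d => finProdFinEquiv))) _ _ ?_).symm
        intro q
        congr 1
    _ = _ := Fintype.sum_prod_type _

theorem sum_pi_fin_congr {d : ℕ} {a b : ℕ} (h : a = b) (g : (Fin d → ℕ) → ℝ) :
    ∑ p : Fin d → Fin a, g (fun i => (p i : ℕ)) = ∑ p : Fin d → Fin b, g (fun i => (p i : ℕ)) := by
  subst h; rfl

lemma idx_lt {n m kv uv : ℕ} (hk : kv < 2 ^ n) (hu : uv < 2 ^ m) :
    2 ^ m * kv + uv < 2 ^ (n + m) := by
  calc 2 ^ m * kv + uv < 2 ^ m * kv + 2 ^ m := by omega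
  _ = 2 ^ m * (kv + 1) := by ring
  _ ≤ 2 ^ m * 2 ^ n := Nat.mul_le_mul_left _ hk
  _ = 2 ^ (n + m) := by rw [pow_add]; ring

section Sa

variable {d : ℕ} (f : Euc d → ℝ) (ω : ℕ → (Fin d → ℕ) → ℝ)

/-- Riemann-sum approximation at depth `m` below the cube `(n, k)`. -/
def Sa (m n : ℕ) (k : Fin d → ℕ) : ℝ :=
  ∑ u : Fin d → Fin (2 ^ m),
    f (corner d (n + m) (fun i => 2 ^ m * k i + (u i : ℕ))) *
      ω (n + m) (fun i => 2 ^ m * k i + (u i : ℕ))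

lemma Sa_zero (n : ℕ) (k : Fin d → ℕ) : Sa f ω 0 n k = f (corner d n k) * ω n k := by
  rw [Sa]
  have h : ∀ u : Fin d → Fin (2 ^ 0), (fun i => 2 ^ 0 * k i + (u i : ℕ)) = k := by
    intro u; funext i
    have : (u i : ℕ) < 2 ^ 0 := (u i).2
    omega
  rw [Finset.sum_congr rfl (fun u _ => by rw [h u])]
  rw [Finset.sum_const, Finset.card_univ]
  have : Fintype.card (Fin d → Fin (2 ^ 0)) = 1 := by simp
  rw [this]
  simp

/-- Splitting at the top: `Sa (m+1)` of a cube is the sum of `Sa m` over its children. -/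
lemma Sa_top (m n : ℕ) (k : Fin d → ℕ) :
    Sa f ω (m + 1) n k =
      ∑ u : Fin d → Fin 2, Sa f ω m (n + 1) (fun i => 2 * k i + (u i : ℕ)) := by
  rw [Sa]
  rw [sum_pi_fin_congr (show 2 ^ (m+1) = 2 * 2 ^ m from by rw [pow_succ]; ring)
    (fun c => f (corner d (n + (m+1)) (fun i => 2 ^ (m+1) * k i + c i)) *
      ω (n + (m+1)) (fun i => 2 ^ (m+1) * k i + c i))]
  rw [sum_pi_fin_mul 2 (2 ^ m)
    (fun c => f (corner d (n + (m+1)) (fun i => 2 ^ (m+1) * k i + c i)) *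
      ω (n + (m+1)) (fun i => 2 ^ (m+1) * k i + c i))]
  apply Finset.sum_congr rfl
  intro u _
  rw [Sa]
  apply Finset.sum_congr rfl
  intro v _
  have hgen : n + (m + 1) = (n + 1) + m := by omega
  have hidx : (fun i => 2 ^ (m+1) * k i + ((v i : ℕ) + 2 ^ m * (u i : ℕ)))
      = (fun i => 2 ^ m * (2 * k i + (u i : ℕ)) + (v i : ℕ)) := by
    funext i; rw [pow_succ]; ring
  rw [hgen, hidx]

/-- Splitting at the bottom, using additivity of `ω`. -/
lemma Sa_succ_sub (hω : IsAdditiveDy d ω) (m n : ℕ) (k : Fin d → ℕ) (hk : ∀ i, k i < 2 ^ n) :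
    Sa f ω (m + 1) n k - Sa f ω m n k =
      ∑ u : Fin d → Fin (2 ^ m), ∑ v : Fin d → Fin 2,
        (f (corner d (n + m + 1) (fun i => 2 * (2 ^ m * k i + (u i : ℕ)) + (v i : ℕ)))
          - f (corner d (n + m) (fun i => 2 ^ m * k i + (u i : ℕ)))) *
        ω (n + m + 1) (fun i => 2 * (2 ^ m * k i + (u i : ℕ)) + (v i : ℕ)) := by
  have hA : Sa f ω (m + 1) n k =
      ∑ u : Fin d → Fin (2 ^ m), ∑ v : Fin d → Fin 2,
        f (corner d (n + m + 1) (fun i => 2 * (2 ^ m * k i + (u i : ℕ)) + (v i : ℕ))) *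
        ω (n + m + 1) (fun i => 2 * (2 ^ m * k i + (u i : ℕ)) + (v i : ℕ)) := by
    rw [Sa]
    rw [sum_pi_fin_congr (show 2 ^ (m+1) = 2 ^ m * 2 from by rw [pow_succ])
      (fun c => f (corner d (n + (m+1)) (fun i => 2 ^ (m+1) * k i + c i)) *
        ω (n + (m+1)) (fun i => 2 ^ (m+1) * k i + c i))]
    rw [sum_pi_fin_mul (2 ^ m) 2
      (fun c => f (corner d (n + (m+1)) (fun i => 2 ^ (m+1) * k i + c i)) *
        ω (n + (m+1)) (fun i => 2 ^ (m+1) * k i + c i))]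
    apply Finset.sum_congr rfl
    intro u _
    apply Finset.sum_congr rfl
    intro v _
    have hgen : n + (m + 1) = n + m + 1 := by omega
    have hidx : (fun i => 2 ^ (m+1) * k i + ((v i : ℕ) + 2 * (u i : ℕ)))
        = (fun i => 2 * (2 ^ m * k i + (u i : ℕ)) + (v i : ℕ)) := by
      funext i; rw [pow_succ]; ring
    rw [hgen, hidx]
  have hB : Sa f ω m n k =
      ∑ u : Fin d → Fin (2 ^ m), ∑ v : Fin d → Fin 2,
        f (corner d (n + m) (fun i => 2 ^ m * k i + (u i : ℕ))) *
        ω (n + m + 1) (fun i => 2 * (2 ^ m * k i + (u i : ℕ)) + (v i : ℕ)) := by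
    rw [Sa]
    apply Finset.sum_congr rfl
    intro u _
    rw [← Finset.mul_sum]
    congr 1
    exact hω (n + m) _ (fun i => idx_lt (hk i) (u i).2)
  rw [hA, hB, ← Finset.sum_sub_distrib]
  apply Finset.sum_congr rfl
  intro u _
  rw [← Finset.sum_sub_distrib]
  apply Finset.sum_congr rfl
  intro v _
  ring

/-- Iterated additivity. -/
lemma additive_iter {θ : ℕ → (Fin d → ℕ) → ℝ} (hθ : IsAdditiveDy d θ) (m : ℕ) :
    ∀ (n : ℕ) (k : Fin d → ℕ), (∀ i, k i < 2 ^ n) →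
      θ n k = ∑ u : Fin d → Fin (2 ^ m), θ (n + m) (fun i => 2 ^ m * k i + (u i : ℕ)) := by
  induction m with
  | zero =>
    intro n k hk
    have h : ∀ u : Fin d → Fin (2 ^ 0), (fun i => 2 ^ 0 * k i + (u i : ℕ)) = k := by
      intro u; funext i
      have : (u i : ℕ) < 2 ^ 0 := (u i).2
      omega
    rw [Finset.sum_congr rfl (fun u _ => by rw [h u])]
    rw [Finset.sum_const, Finset.card_univ]
    have hc : Fintype.card (Fin d → Fin (2 ^ 0)) = 1 := by simp
    rw [hc]
    simp
  | succ m ih =>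
    intro n k hk
    rw [ih n k hk]
    rw [Finset.sum_congr rfl (fun u _ =>
      hθ (n + m) (fun i => 2 ^ m * k i + (u i : ℕ)) (fun i => idx_lt (hk i) (u i).2))]
    rw [sum_pi_fin_congr (show 2 ^ (m+1) = 2 ^ m * 2 from by rw [pow_succ])
      (fun c => θ (n + (m+1)) (fun i => 2 ^ (m+1) * k i + c i))]
    rw [sum_pi_fin_mul (2 ^ m) 2 (fun c => θ (n + (m+1)) (fun i => 2 ^ (m+1) * k i + c i))]
    apply Finset.sum_congr rfl
    intro u _
    apply Finset.sum_congr rfl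
    intro v _
    have hgen : n + m + 1 = n + (m + 1) := by omega
    have hidx : (fun i => 2 * (2 ^ m * k i + (u i : ℕ)) + (v i : ℕ))
        = (fun i => 2 ^ (m+1) * k i + ((v i : ℕ) + 2 * (u i : ℕ))) := by
      funext i; rw [pow_succ]; ring
    rw [hgen, hidx]

end Sa

lemma holder_bound {d : ℕ} {f : Euc d → ℝ} {L β : ℝ} (hβ : 0 < β) (hL : 0 ≤ L)
    (hf : ∀ x ∈ uCube d, ∀ y ∈ uCube d, |f x - f y| ≤ L * ‖x - y‖ ^ β)
    {N : ℕ} {x y : Euc d} (hx : x ∈ uCube d) (hy : y ∈ uCube d)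
    (hxy : ‖x - y‖ ≤ Real.sqrt d * pw (-(N:ℝ))) :
    |f x - f y| ≤ L * Real.sqrt d ^ β * pw (-(N:ℝ) * β) := by
  calc |f x - f y| ≤ L * ‖x - y‖ ^ β := hf x hx y hy
    _ ≤ L * (Real.sqrt d * pw (-(N:ℝ))) ^ β := by
        apply mul_le_mul_of_nonneg_left _ hL
        exact Real.rpow_le_rpow (norm_nonneg _) hxy hβ.le
    _ = L * Real.sqrt d ^ β * pw (-(N:ℝ) * β) := by
        rw [Real.mul_rpow (Real.sqrt_nonneg _) (pw_nonneg _), pw_rpow]; ring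

/-- The lower corner of a child cube lies in the parent cube. -/
lemma corner_child_mem {d : ℕ} (N : ℕ) (K : Fin d → ℕ) (v : Fin d → Fin 2) :
    corner d (N + 1) (fun i => 2 * K i + (v i : ℕ)) ∈ dyCube d N K := by
  intro i
  have h2 : (0:ℝ) < 2 ^ N := by positivity
  have h2' : (0:ℝ) < 2 ^ (N+1) := by positivity
  have hv : ((v i : ℕ) : ℝ) ≤ 1 := by
    have : (v i : ℕ) < 2 := (v i).2
    exact_mod_cast Nat.lt_succ_iff.mp this
  have hv0 : (0:ℝ) ≤ ((v i : ℕ) : ℝ) := by positivity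
  rw [corner_apply]
  push_cast
  rw [div_le_div_iff₀ h2 h2', div_le_div_iff₀ h2' h2, pow_succ]
  constructor <;> nlinarith

section Bounds

variable {d : ℕ} {β γ L M : ℝ} {f : Euc d → ℝ} {ω : ℕ → (Fin d → ℕ) → ℝ}

lemma Sa_diff_bound (hd : 0 < d) (hβ : 0 < β) (hγ : 0 < γ) (hL : 0 ≤ L) (hM : 0 ≤ M)
    (hf : ∀ x ∈ uCube d, ∀ y ∈ uCube d, |f x - f y| ≤ L * ‖x - y‖ ^ β)
    (hω : IsAdditiveDy d ω)
    (hMω : ∀ n (k : Fin d → ℕ), (∀ i, k i < 2 ^ n) → |ω n k| ≤ M * dyVol d n ^ γ)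
    (m n : ℕ) (k : Fin d → ℕ) (hk : ∀ i, k i < 2 ^ n) :
    |Sa f ω (m + 1) n k - Sa f ω m n k| ≤
      (pw d * Real.sqrt d ^ β * L * M * pw (-(n:ℝ) * (β + d * γ))) *
        pw (((d:ℝ) - (β + d * γ)) * m) := by
  set N := n + m with hN
  set T : ℝ := (L * Real.sqrt d ^ β * pw (-(N:ℝ) * β)) *
      (M * pw (-(((N+1)*d : ℕ) : ℝ) * γ)) with hT
  have hcβ : (0:ℝ) ≤ Real.sqrt d ^ β := Real.rpow_nonneg (Real.sqrt_nonneg _) _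
  have hterm : ∀ (u : Fin d → Fin (2 ^ m)) (v : Fin d → Fin 2),
      |(f (corner d (N + 1) (fun i => 2 * (2 ^ m * k i + (u i : ℕ)) + (v i : ℕ)))
          - f (corner d N (fun i => 2 ^ m * k i + (u i : ℕ)))) *
        ω (N + 1) (fun i => 2 * (2 ^ m * k i + (u i : ℕ)) + (v i : ℕ))| ≤ T := by
    intro u v
    set K : Fin d → ℕ := fun i => 2 ^ m * k i + (u i : ℕ) with hK
    have hKlt : ∀ i, K i < 2 ^ N := fun i => idx_lt (hk i) (u i).2
    have hKlt' : ∀ i, 2 * K i + (v i : ℕ) < 2 ^ (N + 1) := by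
      intro i
      have hv2 : (v i : ℕ) < 2 ^ 1 := by have := (v i).2; omega
      have := idx_lt (n := N) (m := 1) (hKlt i) hv2
      simpa [pow_one] using this
    have hc1 : corner d (N + 1) (fun i => 2 * K i + (v i : ℕ)) ∈ dyCube d N K :=
      corner_child_mem N K v
    have hc0 : corner d N K ∈ dyCube d N K := corner_mem d N K
    have hdist : ‖corner d (N + 1) (fun i => 2 * K i + (v i : ℕ)) - corner d N K‖ ≤
        Real.sqrt d * pw (-(N:ℝ)) := dist_le_in_cube hc1 hc0
    have hfb := holder_bound hβ hL hf
      (dyCube_subset_uCube hKlt hc1) (dyCube_subset_uCube hKlt hc0) hdist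
    have hωb : |ω (N + 1) (fun i => 2 * K i + (v i : ℕ))| ≤
        M * pw (-(((N+1)*d : ℕ) : ℝ) * γ) := by
      rw [← dyVol_rpow]
      exact hMω (N+1) _ hKlt'
    rw [abs_mul, hT]
    apply mul_le_mul hfb hωb (abs_nonneg _)
    exact mul_nonneg (mul_nonneg hL hcβ) (pw_nonneg _)
  have hTnn : 0 ≤ T := by
    rw [hT]
    apply mul_nonneg <;> apply mul_nonneg
    · exact mul_nonneg hL hcβ
    · exact pw_nonneg _
    · exact hM
    · exact pw_nonneg _
  rw [Sa_succ_sub f ω hω m n k hk]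
  have hb1 : |∑ u : Fin d → Fin (2 ^ m), ∑ v : Fin d → Fin 2,
      (f (corner d (n + m + 1) (fun i => 2 * (2 ^ m * k i + (u i : ℕ)) + (v i : ℕ)))
        - f (corner d (n + m) (fun i => 2 ^ m * k i + (u i : ℕ)))) *
      ω (n + m + 1) (fun i => 2 * (2 ^ m * k i + (u i : ℕ)) + (v i : ℕ))|
      ≤ (((2 ^ m) ^ d : ℕ) : ℝ) * ((2 ^ d : ℕ) : ℝ) * T := by
    calc _ ≤ ∑ u : Fin d → Fin (2 ^ m), |∑ v : Fin d → Fin 2, _| :=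
          Finset.abs_sum_le_sum_abs _ _
      _ ≤ ∑ _u : Fin d → Fin (2 ^ m), (((2 ^ d : ℕ) : ℝ) * T) := by
          apply Finset.sum_le_sum
          intro u _
          calc _ ≤ ∑ v : Fin d → Fin 2, |_| := Finset.abs_sum_le_sum_abs _ _
            _ ≤ ∑ _v : Fin d → Fin 2, T := Finset.sum_le_sum (fun v _ => hterm u v)
            _ = ((2 ^ d : ℕ) : ℝ) * T := by
                rw [Finset.sum_const, Finset.card_univ, Fintype.card_fun]
                simp [nsmul_eq_mul]
      _ = (((2 ^ m) ^ d : ℕ) : ℝ) * ((2 ^ d : ℕ) : ℝ) * T := by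
          rw [Finset.sum_const, Finset.card_univ, Fintype.card_fun]
          simp [nsmul_eq_mul, mul_assoc]
  refine hb1.trans ?_
  -- final power arithmetic
  have e1 : (((2 ^ m) ^ d : ℕ) : ℝ) = pw ((m * d : ℕ) : ℝ) := by
    rw [← pw_natCast]
    push_cast
    ring
  have e2 : ((2 ^ d : ℕ) : ℝ) = pw ((d : ℕ) : ℝ) := by
    rw [← pw_natCast]
    push_cast
    ring
  rw [e1, e2, hT]
  have lhs_eq : pw ((m * d : ℕ) : ℝ) * pw ((d : ℕ) : ℝ) *
      ((L * Real.sqrt d ^ β * pw (-(N:ℝ) * β)) * (M * pw (-(((N+1)*d : ℕ) : ℝ) * γ)))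
      = (L * M * Real.sqrt d ^ β) *
        pw (((m * d : ℕ) : ℝ) + ((d : ℕ) : ℝ) + (-(N:ℝ) * β) + (-(((N+1)*d : ℕ) : ℝ) * γ)) := by
    rw [pw_add, pw_add, pw_add]; ring
  have rhs_eq : (pw d * Real.sqrt d ^ β * L * M * pw (-(n:ℝ) * (β + d * γ))) *
      pw (((d:ℝ) - (β + d * γ)) * m)
      = (L * M * Real.sqrt d ^ β) *
        pw ((d:ℝ) + (-(n:ℝ) * (β + d * γ)) + ((d:ℝ) - (β + d * γ)) * m) := by
    rw [pw_add, pw_add]; ring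
  rw [lhs_eq, rhs_eq]
  apply mul_le_mul_of_nonneg_left _ (by positivity)
  apply pw_mono
  have hdγ : (0:ℝ) ≤ (d:ℝ) * γ := mul_nonneg (Nat.cast_nonneg d) hγ.le
  rw [hN]
  push_cast
  nlinarith [hdγ]

end Bounds

/-- The indefinite Young integral. -/
def θY {d : ℕ} (f : Euc d → ℝ) (ω : ℕ → (Fin d → ℕ) → ℝ) (n : ℕ) (k : Fin d → ℕ) : ℝ :=
  Sa f ω 0 n k + ∑' m, (Sa f ω (m + 1) n k - Sa f ω m n k)

lemma child_lt {d n : ℕ} {k : Fin d → ℕ} (hk : ∀ i, k i < 2 ^ n) (j : Fin d → Fin 2) :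
    ∀ i, 2 * k i + (j i : ℕ) < 2 ^ (n + 1) := by
  intro i
  have h1 : (j i : ℕ) < 2 ^ 1 := by have := (j i).2; omega
  have := idx_lt (n := n) (m := 1) (hk i) h1
  simpa [pow_one] using this

section Theta

variable {d : ℕ} {β γ L M : ℝ} {f : Euc d → ℝ} {ω : ℕ → (Fin d → ℕ) → ℝ}

variable (hd : 0 < d) (hβ : 0 < β) (hγ : 0 < γ) (hL : 0 ≤ L) (hM : 0 ≤ M)
  (hf : ∀ x ∈ uCube d, ∀ y ∈ uCube d, |f x - f y| ≤ L * ‖x - y‖ ^ β)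
  (hω : IsAdditiveDy d ω)
  (hMω : ∀ n (k : Fin d → ℕ), (∀ i, k i < 2 ^ n) → |ω n k| ≤ M * dyVol d n ^ γ)
  (hE : (d:ℝ) < β + d * γ)

include hd hβ hγ hL hM hf hω hMω hE

lemma Sa_diff_bound' (m n : ℕ) (k : Fin d → ℕ) (hk : ∀ i, k i < 2 ^ n) :
    |Sa f ω (m + 1) n k - Sa f ω m n k| ≤
      (pw d * Real.sqrt d ^ β * L * M * pw (-(n:ℝ) * (β + d * γ))) *
        pw ((d:ℝ) - (β + d * γ)) ^ m := by
  rw [pw_nat_pow]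
  exact Sa_diff_bound hd hβ hγ hL hM hf hω hMω m n k hk

lemma Sa_summable (n : ℕ) (k : Fin d → ℕ) (hk : ∀ i, k i < 2 ^ n) :
    Summable (fun m => Sa f ω (m + 1) n k - Sa f ω m n k) := by
  have hr0 : 0 ≤ pw ((d:ℝ) - (β + d * γ)) := pw_nonneg _
  have hr1 : pw ((d:ℝ) - (β + d * γ)) < 1 := pw_lt_one (by linarith)
  exact Summable.of_norm_bounded
    (((summable_geometric_of_lt_one hr0 hr1).mul_left
      (pw d * Real.sqrt d ^ β * L * M * pw (-(n:ℝ) * (β + d * γ)))))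
    (fun m => by
      rw [Real.norm_eq_abs]
      exact Sa_diff_bound' hd hβ hγ hL hM hf hω hMω hE m n k hk)

lemma Sa_tendsto (n : ℕ) (k : Fin d → ℕ) (hk : ∀ i, k i < 2 ^ n) :
    Filter.Tendsto (fun m => Sa f ω m n k) atTop (nhds (θY f ω n k)) := by
  have key : ∀ m, ∑ i ∈ Finset.range m, (Sa f ω (i + 1) n k - Sa f ω i n k)
      = Sa f ω m n k - Sa f ω 0 n k :=
    fun m => Finset.sum_range_sub (fun i => Sa f ω i n k) m
  have h := ((Sa_summable hd hβ hγ hL hM hf hω hMω hE n k hk).hasSum.tendsto_sum_nat).add_const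
    (Sa f ω 0 n k)
  simp only [key] at h
  simpa [sub_add_cancel, θY, add_comm] using h

lemma θY_additive : IsAdditiveDy d (θY f ω) := by
  intro n k hk
  have h1 : Filter.Tendsto (fun m => Sa f ω (m + 1) n k) atTop (nhds (θY f ω n k)) :=
    (Sa_tendsto hd hβ hγ hL hM hf hω hMω hE n k hk).comp (tendsto_add_atTop_nat 1)
  have h2 : Filter.Tendsto
      (fun m => ∑ j : Fin d → Fin 2, Sa f ω m (n + 1) (fun i => 2 * k i + (j i : ℕ)))
      atTop (nhds (∑ j : Fin d → Fin 2, θY f ω (n + 1) (fun i => 2 * k i + (j i : ℕ)))) := by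
    apply tendsto_finset_sum
    intro j _
    exact Sa_tendsto hd hβ hγ hL hM hf hω hMω hE (n + 1) _ (child_lt hk j)
  have h3 : (fun m => Sa f ω (m + 1) n k)
      = fun m => ∑ j : Fin d → Fin 2, Sa f ω m (n + 1) (fun i => 2 * k i + (j i : ℕ)) := by
    funext m
    exact Sa_top f ω m n k
  rw [h3] at h1
  exact tendsto_nhds_unique h1 h2

lemma θY_est (n : ℕ) (k : Fin d → ℕ) (hk : ∀ i, k i < 2 ^ n) :
    |θY f ω n k - f (corner d n k) * ω n k| ≤
      (pw d * Real.sqrt d ^ β * L * M * pw (-(n:ℝ) * (β + d * γ))) *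
        (1 - pw ((d:ℝ) - (β + d * γ)))⁻¹ := by
  have hr0 : 0 ≤ pw ((d:ℝ) - (β + d * γ)) := pw_nonneg _
  have hr1 : pw ((d:ℝ) - (β + d * γ)) < 1 := pw_lt_one (by linarith)
  have hgeo := (hasSum_geometric_of_lt_one hr0 hr1).mul_left
    (pw d * Real.sqrt d ^ β * L * M * pw (-(n:ℝ) * (β + d * γ)))
  have h := tsum_of_norm_bounded hgeo
    (fun m => by
      rw [Real.norm_eq_abs]
      exact Sa_diff_bound' hd hβ hγ hL hM hf hω hMω hE m n k hk)
  have heq : θY f ω n k - f (corner d n k) * ω n k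
      = ∑' m, (Sa f ω (m + 1) n k - Sa f ω m n k) := by
    rw [θY, Sa_zero]; ring
  rw [heq]
  calc |∑' m, (Sa f ω (m + 1) n k - Sa f ω m n k)|
      = ‖∑' m, (Sa f ω (m + 1) n k - Sa f ω m n k)‖ := (Real.norm_eq_abs _).symm
    _ ≤ _ := h

end Theta

lemma additive_vanish {d : ℕ} {δ : ℕ → (Fin d → ℕ) → ℝ} (hδ : IsAdditiveDy d δ)
    {E : ℝ} (hdE : (d:ℝ) < E) {D : ℝ}
    (hb : ∀ n (k : Fin d → ℕ), (∀ i, k i < 2 ^ n) → |δ n k| ≤ D * pw (-(n:ℝ) * E)) :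
    ∀ n (k : Fin d → ℕ), (∀ i, k i < 2 ^ n) → δ n k = 0 := by
  intro n k hk
  have hr0 : 0 ≤ pw ((d:ℝ) - E) := pw_nonneg _
  have hr1 : pw ((d:ℝ) - E) < 1 := pw_lt_one (by linarith)
  have key : ∀ m, |δ n k| ≤ (D * pw (-(n:ℝ) * E)) * pw ((d:ℝ) - E) ^ m := by
    intro m
    rw [additive_iter hδ m n k hk]
    calc |∑ u : Fin d → Fin (2 ^ m), δ (n + m) (fun i => 2 ^ m * k i + (u i : ℕ))|
        ≤ ∑ u : Fin d → Fin (2 ^ m), |δ (n + m) (fun i => 2 ^ m * k i + (u i : ℕ))| :=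
          Finset.abs_sum_le_sum_abs _ _
      _ ≤ ∑ _u : Fin d → Fin (2 ^ m), D * pw (-((n+m:ℕ):ℝ) * E) :=
          Finset.sum_le_sum (fun u _ => hb (n + m) _ (fun i => idx_lt (hk i) (u i).2))
      _ = (((2 ^ m) ^ d : ℕ) : ℝ) * (D * pw (-((n+m:ℕ):ℝ) * E)) := by
          rw [Finset.sum_const, Finset.card_univ, Fintype.card_fun]
          simp [nsmul_eq_mul]
      _ = (D * pw (-(n:ℝ) * E)) * pw ((d:ℝ) - E) ^ m := by
          have e1 : (((2 ^ m) ^ d : ℕ) : ℝ) = pw ((m * d : ℕ) : ℝ) := by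
            rw [← pw_natCast]; push_cast; ring
          rw [e1, pw_nat_pow]
          calc pw ((m*d:ℕ):ℝ) * (D * pw (-((n+m:ℕ):ℝ) * E))
              = D * (pw ((m*d:ℕ):ℝ) * pw (-((n+m:ℕ):ℝ) * E)) := by ring
            _ = D * pw (((m*d:ℕ):ℝ) + -((n+m:ℕ):ℝ) * E) := by rw [pw_add]
            _ = D * (pw (-(n:ℝ) * E) * pw (((d:ℝ) - E) * (m:ℝ))) := by
                rw [← pw_add]; congr 1; push_cast; ring
            _ = D * pw (-(n:ℝ) * E) * pw (((d:ℝ) - E) * (m:ℝ)) := by ring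
  have h0 : Filter.Tendsto (fun m => (D * pw (-(n:ℝ) * E)) * pw ((d:ℝ) - E) ^ m)
      atTop (nhds 0) := by
    have := (tendsto_pow_atTop_nhds_zero_of_lt_one hr0 hr1).const_mul (D * pw (-(n:ℝ) * E))
    simpa using this
  have : |δ n k| ≤ 0 := ge_of_tendsto' h0 key
  have := le_antisymm this (abs_nonneg _)
  exact abs_eq_zero.mp this

end Young

open Young in
/-- **Indefinite Young integral on dyadic cubes with the Young–Loeve estimate**
(Theorems 4.4 and 4.5, dyadic form). -/
theorem indefinite_young_integral (d : ℕ) (hd : 0 < d) (β γ : ℝ)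
    (hβ0 : 0 < β) (hβ1 : β < 1) (hγ0 : 0 < γ) (hγ1 : γ < 1)
    (hγd : ((d : ℝ) - 1) / d < γ) (hβγ : (d : ℝ) < β + d * γ) :
    ∃ C : ℝ, 0 ≤ C ∧ ∀ (f : Euc d → ℝ) (L : ℝ),
      (∀ x ∈ uCube d, ∀ y ∈ uCube d, |f x - f y| ≤ L * ‖x - y‖ ^ β) →
      ∀ ω : ∀ _ : ℕ, (Fin d → ℕ) → ℝ, IsAdditiveDy d ω →
      ∀ M : ℝ, (∀ n (k : Fin d → ℕ), (∀ i, k i < 2 ^ n) → |ω n k| ≤ M * dyVol d n ^ γ) →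
      ∃ θ : ∀ _ : ℕ, (Fin d → ℕ) → ℝ,
        (IsAdditiveDy d θ ∧
          ∀ n (k : Fin d → ℕ), (∀ i, k i < 2 ^ n) → ∀ x ∈ dyCube d n k,
            |θ n k - f x * ω n k| ≤ C * L * M * dyVol d n ^ (γ + β / d)) ∧
        ∀ θ' : ∀ _ : ℕ, (Fin d → ℕ) → ℝ, IsAdditiveDy d θ' →
          (∀ n (k : Fin d → ℕ), (∀ i, k i < 2 ^ n) → ∀ x ∈ dyCube d n k,
            |θ' n k - f x * ω n k| ≤ C * L * M * dyVol d n ^ (γ + β / d)) →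
          ∀ n (k : Fin d → ℕ), (∀ i, k i < 2 ^ n) → θ' n k = θ n k := by
  have hr0 : 0 ≤ pw ((d:ℝ) - (β + d * γ)) := pw_nonneg _
  have hr1 : pw ((d:ℝ) - (β + d * γ)) < 1 := pw_lt_one (by linarith)
  have hinv : 0 ≤ (1 - pw ((d:ℝ) - (β + d * γ)))⁻¹ := by
    apply inv_nonneg.mpr; linarith
  have hcβ : (0:ℝ) ≤ Real.sqrt d ^ β := Real.rpow_nonneg (Real.sqrt_nonneg _) _
  set C : ℝ := pw d * Real.sqrt d ^ β * (1 - pw ((d:ℝ) - (β + d * γ)))⁻¹ + Real.sqrt d ^ β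
    with hC
  have hC0 : 0 ≤ C := by
    apply add_nonneg _ hcβ
    exact mul_nonneg (mul_nonneg (pw_nonneg _) hcβ) hinv
  refine ⟨C, hC0, ?_⟩
  intro f L hf ω hω M hM
  -- nonnegativity of M
  have hM0 : 0 ≤ M := by
    have h := hM 0 (fun _ => 0) (fun i => by norm_num)
    have h1 : dyVol d 0 ^ γ = 1 := by
      rw [dyVol]
      norm_num
    rw [h1, mul_one] at h
    exact (abs_nonneg _).trans h
  -- nonnegativity of L
  have hL0 : 0 ≤ L := by
    have hx0 : (WithLp.toLp 2 (fun _ => (0:ℝ)) : Euc d) ∈ uCube d := by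
      intro i; constructor <;> norm_num
    have hy0 : (WithLp.toLp 2 (fun _ => (1:ℝ)) : Euc d) ∈ uCube d := by
      intro i; constructor <;> norm_num
    have h := hf _ hx0 _ hy0
    have hne : (WithLp.toLp 2 (fun _ => (0:ℝ)) - WithLp.toLp 2 (fun _ => (1:ℝ)) : Euc d) ≠ 0 := by
      intro hEq
      have h1 : ((WithLp.toLp 2 (fun _ => (0:ℝ)) - WithLp.toLp 2 (fun _ => (1:ℝ)) : Euc d)) ⟨0, hd⟩ = -1 := by
        show (0:ℝ) - 1 = -1; norm_num
      rw [hEq] at h1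
      norm_num at h1
    have hP : 0 < ‖(WithLp.toLp 2 (fun _ => (0:ℝ)) - WithLp.toLp 2 (fun _ => (1:ℝ)) : Euc d)‖ ^ β :=
      Real.rpow_pos_of_pos (norm_pos_iff.mpr hne) β
    have h2 : (0:ℝ) * ‖(WithLp.toLp 2 (fun _ => (0:ℝ)) - WithLp.toLp 2 (fun _ => (1:ℝ)) : Euc d)‖ ^ β ≤
        L * ‖(WithLp.toLp 2 (fun _ => (0:ℝ)) - WithLp.toLp 2 (fun _ => (1:ℝ)) : Euc d)‖ ^ β := by
      rw [zero_mul]; exact (abs_nonneg _).trans h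
    exact le_of_mul_le_mul_right h2 hP
  have hvol : ∀ n : ℕ, dyVol d n ^ (γ + β / d) = pw (-(n:ℝ) * (β + d * γ)) := by
    intro n
    rw [dyVol_rpow]
    congr 1
    have hd0 : (d:ℝ) ≠ 0 := Nat.cast_ne_zero.mpr hd.ne'
    push_cast
    field_simp
    ring
  -- the main estimate for θY
  have hest : ∀ (n : ℕ) (k : Fin d → ℕ), (∀ i, k i < 2 ^ n) → ∀ x ∈ dyCube d n k,
      |θY f ω n k - f x * ω n k| ≤ C * L * M * dyVol d n ^ (γ + β / d) := by
    intro n k hk x hx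
    have hsplit : θY f ω n k - f x * ω n k =
        (θY f ω n k - f (corner d n k) * ω n k) + (f (corner d n k) - f x) * ω n k := by
      ring
    have h1 := θY_est hd hβ0 hγ0 hL0 hM0 hf hω hM hβγ n k hk
    have hfd : |f (corner d n k) - f x| ≤ L * Real.sqrt d ^ β * pw (-(n:ℝ) * β) :=
      holder_bound hβ0 hL0 hf
        (dyCube_subset_uCube hk (corner_mem d n k)) (dyCube_subset_uCube hk hx)
        (dist_le_in_cube (corner_mem d n k) hx)
    have hωb : |ω n k| ≤ M * pw (-((n*d:ℕ):ℝ) * γ) := by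
      rw [← dyVol_rpow]; exact hM n k hk
    have h2 : |(f (corner d n k) - f x) * ω n k| ≤
        (L * Real.sqrt d ^ β * pw (-(n:ℝ) * β)) * (M * pw (-((n*d:ℕ):ℝ) * γ)) := by
      rw [abs_mul]
      exact mul_le_mul hfd hωb (abs_nonneg _)
        (mul_nonneg (mul_nonneg hL0 hcβ) (pw_nonneg _))
    have hcomb : (L * Real.sqrt d ^ β * pw (-(n:ℝ) * β)) * (M * pw (-((n*d:ℕ):ℝ) * γ))
        = Real.sqrt d ^ β * L * M * pw (-(n:ℝ) * (β + d * γ)) := by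
      rw [show -(n:ℝ) * (β + d * γ) = (-(n:ℝ) * β) + (-((n*d:ℕ):ℝ) * γ) from by
        push_cast; ring, pw_add]
      ring
    rw [hvol n]
    calc |θY f ω n k - f x * ω n k|
        ≤ |θY f ω n k - f (corner d n k) * ω n k| + |(f (corner d n k) - f x) * ω n k| := by
          rw [hsplit]; exact abs_add_le _ _
      _ ≤ (pw d * Real.sqrt d ^ β * L * M * pw (-(n:ℝ) * (β + d * γ))) *
            (1 - pw ((d:ℝ) - (β + d * γ)))⁻¹ +
          Real.sqrt d ^ β * L * M * pw (-(n:ℝ) * (β + d * γ)) := by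
          rw [hcomb] at h2
          linarith
      _ = C * L * M * pw (-(n:ℝ) * (β + d * γ)) := by rw [hC]; ring
  refine ⟨θY f ω, ⟨θY_additive hd hβ0 hγ0 hL0 hM0 hf hω hM hβγ, hest⟩, ?_⟩
  -- uniqueness
  intro θ' hθ'add hθ'est
  have hδadd : IsAdditiveDy d (fun n k => θ' n k - θY f ω n k) := by
    intro n k hk
    show θ' n k - θY f ω n k = ∑ j : Fin d → Fin 2,
      (θ' (n + 1) (fun i => 2 * k i + (j i : ℕ)) - θY f ω (n + 1) (fun i => 2 * k i + (j i : ℕ)))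
    rw [hθ'add n k hk, θY_additive hd hβ0 hγ0 hL0 hM0 hf hω hM hβγ n k hk,
      Finset.sum_sub_distrib]
  have hδb : ∀ n (k : Fin d → ℕ), (∀ i, k i < 2 ^ n) →
      |θ' n k - θY f ω n k| ≤ (2 * (C * L * M)) * pw (-(n:ℝ) * (β + d * γ)) := by
    intro n k hk
    have h1 := hθ'est n k hk (corner d n k) (corner_mem d n k)
    have h2 := hest n k hk (corner d n k) (corner_mem d n k)
    rw [hvol n] at h1 h2
    calc |θ' n k - θY f ω n k|
        = |(θ' n k - f (corner d n k) * ω n k) - (θY f ω n k - f (corner d n k) * ω n k)| := by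
          congr 1
          ring
      _ ≤ |θ' n k - f (corner d n k) * ω n k| + |θY f ω n k - f (corner d n k) * ω n k| :=
          abs_sub _ _
      _ ≤ (2 * (C * L * M)) * pw (-(n:ℝ) * (β + d * γ)) := by linarith
  intro n k hk
  have := additive_vanish hδadd hβγ hδb n k hk
  linarith [this]

end
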